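/- arXiv:1705.08016 — 3 statements merged into one kernel-verified Lean document; each statement's English description precedes it below -/
import Mathlib

section
/- Let 0 < δ₁ < 1/2 and 0 < δ₂ < 1/2. Let p and q be the probability vectors on a two-element set given by p = (1 − δ₁, δ₁) and q = (δ₂, 1 − δ₂). Then the Jeffrey's divergence satisfies D_J(p, q) ≥ (1 − δ₁ − δ₂) · (2·log(1 − δ₁ − δ₂) − log(δ₁ δ₂)). -/
open Real Finset

/-- Jeffrey's divergence for pmfs on a finite type. -/
noncomputable def jeffreys {U : Type*} [Fintype U] (p q : U → ℝ) : ℝ :=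
  ∑ u, (p u - q u) * Real.log (p u / q u)

theorem jeffreys_fin_two (p q : Fin 2 → ℝ) :
    jeffreys p q = (p 0 - q 0) * log (p 0 / q 0) + (p 1 - q 1) * log (p 1 / q 1) :=
  Fin.sum_univ_two _

theorem jeffreys_swapped_binary {δ₁ δ₂ : ℝ} (h₁ : δ₁ ≠ 0) (h₁' : 1 - δ₁ ≠ 0)
    (h₂ : δ₂ ≠ 0) (h₂' : 1 - δ₂ ≠ 0) :
    jeffreys ![1 - δ₁, δ₁] ![δ₂, 1 - δ₂] =
      (1 - δ₁ - δ₂) * (log ((1 - δ₁) * (1 - δ₂)) - log (δ₁ * δ₂)) := by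
  simp only [jeffreys_fin_two, Matrix.cons_val_zero, Matrix.cons_val_one]
  rw [log_div h₁' h₂, log_div h₁ h₂', log_mul h₁' h₂', log_mul h₁ h₂]
  ring

theorem two_mul_log_le_log_mul {s a b : ℝ} (hs : 0 < s) (ha : s ≤ a) (hb : s ≤ b) :
    2 * log s ≤ log (a * b) := by
  rw [two_mul, ← log_mul hs.ne' hs.ne']
  exact log_le_log (mul_pos hs hs) (mul_le_mul ha hb hs.le (hs.le.trans ha))

/-- For binary probability vectors `p = (1 − δ₁, δ₁)` and `q = (δ₂, 1 − δ₂)` with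
`0 < δ₁ < 1/2`, `0 < δ₂ < 1/2`, Jeffrey's divergence is at least
`(1 − δ₁ − δ₂) · (2·log(1 − δ₁ − δ₂) − log(δ₁ δ₂))`. -/
theorem jeffreys_binary_ge (δ₁ δ₂ : ℝ)
    (h₁ : 0 < δ₁) (h₁' : δ₁ < 1 / 2) (h₂ : 0 < δ₂) (h₂' : δ₂ < 1 / 2) :
    jeffreys ![1 - δ₁, δ₁] ![δ₂, 1 - δ₂] ≥
      (1 - δ₁ - δ₂) * (2 * Real.log (1 - δ₁ - δ₂) - Real.log (δ₁ * δ₂)) := by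
  have hs : 0 < 1 - δ₁ - δ₂ := by linarith
  rw [jeffreys_swapped_binary h₁.ne' (by linarith) h₂.ne' (by linarith), ge_iff_le]
  gcongr
  exact two_mul_log_le_log_mul hs (by linarith) (by linarith)
end

section
/- (Lemma 1.) On a finite probability space, the Euclidean Confusion is a lower bound for the Jeffrey's divergence: for strictly positive probability mass functions p and q on a finite set U, D_EC(p, q) ≤ D_J(p, q). -/
/-!
On `(0, 1]` the logarithm has slope at least `1`, so `(a - b) (log a - log b) ≥ (a - b)²` for
`a, b ∈ (0, 1]`; the values of a probability mass function lie in `(0, 1]`, and the inequality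
is summed term by term.
-/

open Real Finset

lemma sub_mul_log_div_symm (a b : ℝ) :
    (a - b) * log (a / b) = (b - a) * log (b / a) := by
  rw [← inv_div b a, log_inv]
  ring

lemma sq_sub_le_sub_mul_log_div_of_le {a b : ℝ} (hb : 0 < b) (hba : b ≤ a) (ha1 : a ≤ 1) :
    (a - b) ^ 2 ≤ (a - b) * log (a / b) := by
  have ha : 0 < a := hb.trans_le hba
  have hab : 0 ≤ a - b := sub_nonneg.mpr hba
  calc (a - b) ^ 2 ≤ (a - b) ^ 2 / a := le_div_self (sq_nonneg _) ha ha1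
    _ = (a - b) * (1 - (a / b)⁻¹) := by field_simp
    _ ≤ (a - b) * log (a / b) :=
      mul_le_mul_of_nonneg_left (one_sub_inv_le_log_of_pos (by positivity)) hab

lemma sq_sub_le_sub_mul_log_div {a b : ℝ} (ha : 0 < a) (hb : 0 < b) (ha1 : a ≤ 1)
    (hb1 : b ≤ 1) : (a - b) ^ 2 ≤ (a - b) * log (a / b) := by
  rcases le_total b a with hba | hab
  · exact sq_sub_le_sub_mul_log_div_of_le hb hba ha1
  · rw [sub_mul_log_div_symm, ← neg_sub, neg_sq]
    exact sq_sub_le_sub_mul_log_div_of_le ha hab hb1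

/-- **Lemma 1.** On a finite probability space, the Euclidean Confusion is a lower bound for
Jeffrey's divergence: for strictly positive pmfs `p`, `q`,
`∑ (p u − q u)² ≤ ∑ (p u − q u)·log(p u / q u)`. -/
theorem euclidean_confusion_le_jeffreys {U : Type*} [Fintype U] (p q : U → ℝ)
    (hp : ∀ u, 0 < p u) (hq : ∀ u, 0 < q u)
    (hp1 : ∑ u, p u = 1) (hq1 : ∑ u, q u = 1) :
    ∑ u, (p u - q u) ^ 2 ≤ ∑ u, (p u - q u) * Real.log (p u / q u) := by
  refine sum_le_sum fun u _ => sq_sub_le_sub_mul_log_div (hp u) (hq u) ?_ ?_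
  · exact hp1 ▸ single_le_sum (fun i _ => (hp i).le) (mem_univ u)
  · exact hq1 ▸ single_le_sum (fun i _ => (hq i).le) (mem_univ u)
end

section
/- (Lemma 3.) Let a : Fin m → ℝ^N and b : Fin n → ℝ^N be finite families of vectors with m, n ≥ 1. Then half the squared energy distance under the squared-Euclidean cost, with random vectors sampled uniformly from the two families, is bounded above by the set-level Euclidean Confusion: (1/2)·D_EN(a, b)² ≤ D_EC(a, b). -/
open Finset

/-- Set-level Euclidean Confusion between two finite families of vectors in `ℝ^N`. -/
noncomputable def euclideanConfusionSets {N m n : ℕ}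
    (a : Fin m → EuclideanSpace ℝ (Fin N)) (b : Fin n → EuclideanSpace ℝ (Fin N)) : ℝ :=
  (1 / (m * n) : ℝ) * ∑ u, ∑ v, ‖a u - b v‖ ^ 2

/-- Squared energy distance under the squared-Euclidean cost, with all random vectors sampled
uniformly and independently from the two families. -/
noncomputable def energyDistanceSq {N m n : ℕ}
    (a : Fin m → EuclideanSpace ℝ (Fin N)) (b : Fin n → EuclideanSpace ℝ (Fin N)) : ℝ :=
  2 * ((1 / (m * n) : ℝ) * ∑ u, ∑ v, ‖a u - b v‖ ^ 2)
    - (1 / (m : ℝ) ^ 2) * ∑ u, ∑ u', ‖a u - a u'‖ ^ 2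
    - (1 / (n : ℝ) ^ 2) * ∑ v, ∑ v', ‖b v - b v'‖ ^ 2

noncomputable def meanSqSpread {ι E : Type*} [Fintype ι] [SeminormedAddCommGroup E]
    (x : ι → E) : ℝ :=
  (1 / (Fintype.card ι : ℝ) ^ 2) * ∑ i, ∑ j, ‖x i - x j‖ ^ 2

lemma meanSqSpread_nonneg {ι E : Type*} [Fintype ι] [SeminormedAddCommGroup E] (x : ι → E) :
    0 ≤ meanSqSpread x := by
  unfold meanSqSpread
  positivity

lemma energyDistanceSq_eq_two_mul_euclideanConfusionSets_sub {N m n : ℕ}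
    (a : Fin m → EuclideanSpace ℝ (Fin N)) (b : Fin n → EuclideanSpace ℝ (Fin N)) :
    energyDistanceSq a b = 2 * euclideanConfusionSets a b - meanSqSpread a - meanSqSpread b := by
  simp only [energyDistanceSq, euclideanConfusionSets, meanSqSpread, Fintype.card_fin]

theorem half_energyDistanceSq_le_euclideanConfusion_general {N m n : ℕ}
    (a : Fin m → EuclideanSpace ℝ (Fin N)) (b : Fin n → EuclideanSpace ℝ (Fin N)) :
    (1 / 2) * energyDistanceSq a b ≤ euclideanConfusionSets a b := by
  rw [energyDistanceSq_eq_two_mul_euclideanConfusionSets_sub]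
  linarith [meanSqSpread_nonneg a, meanSqSpread_nonneg b]

/-- **Lemma 3.** For finite families `a : Fin m → ℝ^N`, `b : Fin n → ℝ^N` with `m, n ≥ 1`:
`(1/2)·D_EN(a, b)² ≤ D_EC(a, b)`. -/
theorem half_energyDistanceSq_le_euclideanConfusion {N m n : ℕ} (hm : 1 ≤ m) (hn : 1 ≤ n)
    (a : Fin m → EuclideanSpace ℝ (Fin N)) (b : Fin n → EuclideanSpace ℝ (Fin N)) :
    (1 / 2) * energyDistanceSq a b ≤ euclideanConfusionSets a b :=
  half_energyDistanceSq_le_euclideanConfusion_general a b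
end
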